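/- The total C-EP weight update recovers the EP update in the small-learning-rate limit. Assume Φ : ℝⁿ × ℝᵖ → ℝ is twice continuously differentiable and ℓ : ℝⁿ → ℝ is continuously differentiable, fix θ ∈ ℝᵖ, a steady state s_* = ∇_sΦ(s_*, θ), β > 0 and K ≥ 1. Then lim_{η→0⁺} (θ_K^{β,η} − θ)/η = Σ_{t=0}^{K−1} Δ_θ^{EP}(β, t) = (1/β)(∇_θΦ(s_K^β, θ) − ∇_θΦ(s_*, θ)). -/

import Mathlib

/-
The C-EP trajectory depends continuously on the learning rate `η`, and at `η = 0` the
parameters stay frozen at `θ`, so the state follows exactly the EP trajectory. Since each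
parameter increment is `η` times a continuous function of `η`, the normalised total update
`(θ_K^{β,η} − θ)/η` is a finite sum of such functions; its limit is their value at `η = 0`,
which is the sum of the EP updates, and that sum telescopes.
-/

open Filter Topology

variable {n p : ℕ}
local notation "𝕊" => EuclideanSpace ℝ (Fin n)
local notation "𝕋" => EuclideanSpace ℝ (Fin p)

open Finset InnerProductSpace

section Gradient

variable {E F : Type*} [NormedAddCommGroup E] [InnerProductSpace ℝ E] [CompleteSpace E]
  [NormedAddCommGroup F] [NormedSpace ℝ F]

theorem ContDiff.continuous_gradient {f : E → ℝ} (hf : ContDiff ℝ 1 f) :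
    Continuous (gradient f) :=
  (toDual ℝ E).symm.continuous.comp (hf.continuous_fderiv one_ne_zero)

theorem ContDiff.continuous_gradient_fst {f : E × F → ℝ} (hf : ContDiff ℝ 1 f) :
    Continuous fun q : E × F => gradient (fun x => f (x, q.2)) q.1 := by
  have hpartial : ∀ q : E × F, gradient (fun x => f (x, q.2)) q.1
      = (toDual ℝ E).symm ((fderiv ℝ f q).comp (ContinuousLinearMap.inl ℝ E F)) := fun q =>
    congrArg _ ((hf.differentiable one_ne_zero q).hasFDerivAt.comp q.1
      (hasFDerivAt_prodMk_left q.1 q.2)).fderiv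
  simp only [hpartial]
  exact (toDual ℝ E).symm.continuous.comp
    ((hf.continuous_fderiv one_ne_zero).clm_comp continuous_const)

end Gradient

theorem ContDiff.continuous_gradient_snd {E F : Type*} [NormedAddCommGroup E] [NormedSpace ℝ E]
    [NormedAddCommGroup F] [InnerProductSpace ℝ F] [CompleteSpace F] {f : E × F → ℝ}
    (hf : ContDiff ℝ 1 f) :
    Continuous fun q : E × F => gradient (fun y => f (q.1, y)) q.2 :=
  (hf.comp (contDiff_snd.prodMk contDiff_fst)).continuous_gradient_fst.comp continuous_swap

theorem continuous_trajectory {Λ X : Type*} [TopologicalSpace Λ] [TopologicalSpace X]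
    {step : Λ → X → X} (hstep : Continuous (Function.uncurry step)) {x : Λ → ℕ → X}
    (h0 : Continuous fun η => x η 0) (hsucc : ∀ η t, x η (t + 1) = step η (x η t)) (t : ℕ) :
    Continuous fun η => x η t := by
  induction t with
  | zero => exact h0
  | succ t ih =>
    simp only [hsucc]
    exact hstep.comp (continuous_id.prodMk ih)

theorem tendsto_inv_smul_sub_of_increment_eq_smul {V : Type*} [NormedAddCommGroup V]
    [NormedSpace ℝ V] {T d : ℝ → ℕ → V} (hT : ∀ η t, T η (t + 1) = T η t + η • d η t)
    (hd : ∀ t, ContinuousAt (fun η => d η t) 0) (K : ℕ) :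
    Tendsto (fun η => η⁻¹ • (T η K - T η 0)) (𝓝[≠] 0) (𝓝 (∑ t ∈ range K, d 0 t)) := by
  have hdisplacement : ∀ η, T η K - T η 0 = η • ∑ t ∈ range K, d η t := fun η => by
    rw [← sum_range_sub, smul_sum]
    exact sum_congr rfl fun t _ => by rw [hT, add_sub_cancel_left]
  have hsum : Tendsto (fun η => ∑ t ∈ range K, d η t) (𝓝[≠] 0) (𝓝 (∑ t ∈ range K, d 0 t)) :=
    (tendsto_finsetSum _ fun t _ => hd t).mono_left nhdsWithin_le_nhds
  refine hsum.congr' ?_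
  filter_upwards [self_mem_nhdsWithin] with η hη
  rw [hdisplacement, inv_smul_smul₀ hη]

section CEP

variable {E F : Type*} [NormedAddCommGroup E] [InnerProductSpace ℝ E] [CompleteSpace E]
  [NormedAddCommGroup F] [InnerProductSpace ℝ F] [CompleteSpace F]

noncomputable def cepStep (Φ : E → F → ℝ) (ℓ : E → ℝ) (β η : ℝ) (q : E × F) : E × F :=
  let s' := gradient (fun s => Φ s q.2) q.1 - β • gradient ℓ q.1
  (s', q.2 + (η / β) • (gradient (fun θ' => Φ s' θ') q.2 - gradient (fun θ' => Φ q.1 θ') q.2))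

theorem cepStep_zero (Φ : E → F → ℝ) (ℓ : E → ℝ) (β : ℝ) (s : E) (θ : F) :
    cepStep Φ ℓ β 0 (s, θ) = (gradient (fun s => Φ s θ) s - β • gradient ℓ s, θ) := by
  simp [cepStep]

theorem continuous_cepStep {Φ : E → F → ℝ} {ℓ : E → ℝ}
    (hΦ : ContDiff ℝ 1 fun q : E × F => Φ q.1 q.2) (hℓ : ContDiff ℝ 1 ℓ) (β : ℝ) :
    Continuous (Function.uncurry (cepStep Φ ℓ β)) := by
  have hgradS := hΦ.continuous_gradient_fst
  have hgradT := hΦ.continuous_gradient_snd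
  have hstate : Continuous fun p : ℝ × (E × F) =>
      gradient (fun s => Φ s p.2.2) p.2.1 - β • gradient ℓ p.2.1 :=
    (hgradS.comp continuous_snd).sub
      ((hℓ.continuous_gradient.comp (continuous_fst.comp continuous_snd)).const_smul β)
  exact hstate.prodMk ((continuous_snd.comp continuous_snd).add
    ((continuous_fst.div_const β).smul
      ((hgradT.comp (hstate.prodMk (continuous_snd.comp continuous_snd))).sub
        (hgradT.comp continuous_snd))))

end CEP

theorem cep_total_update_recovers_ep_general
    (Φ : 𝕊 → 𝕋 → ℝ) (ℓ : 𝕊 → ℝ)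
    (hΦ : ContDiff ℝ 2 (fun q : 𝕊 × 𝕋 => Φ q.1 q.2))
    (hℓ : ContDiff ℝ 1 ℓ)
    (θ : 𝕋) (sstar : 𝕊)
    (β : ℝ) (K : ℕ)
    -- EP second-phase trajectory
    (sEP : ℕ → 𝕊)
    (hsEP0 : sEP 0 = sstar)
    (hsEPrec : ∀ t, sEP (t+1) = gradient (fun s => Φ s θ) (sEP t) - β • gradient ℓ (sEP t))
    -- C-EP second-phase trajectory
    (St : ℝ → ℕ → 𝕊) (Tt : ℝ → ℕ → 𝕋)
    (hS0 : ∀ η, St η 0 = sstar)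
    (hT0 : ∀ η, Tt η 0 = θ)
    (hSrec : ∀ η t, St η (t+1)
      = gradient (fun s => Φ s (Tt η t)) (St η t) - β • gradient ℓ (St η t))
    (hTrec : ∀ η t, Tt η (t+1)
      = Tt η t + (η / β) • (gradient (fun θ' => Φ (St η (t+1)) θ') (Tt η t)
          - gradient (fun θ' => Φ (St η t) θ') (Tt η t))) :
    Tendsto (fun η => η⁻¹ • (Tt η K - θ)) (𝓝[>] (0:ℝ))
      (𝓝 (∑ t ∈ Finset.range K,
        β⁻¹ • (gradient (fun θ' => Φ (sEP (t+1)) θ') θ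
          - gradient (fun θ' => Φ (sEP t) θ') θ)))
    ∧ (∑ t ∈ Finset.range K,
        β⁻¹ • (gradient (fun θ' => Φ (sEP (t+1)) θ') θ
          - gradient (fun θ' => Φ (sEP t) θ') θ))
      = β⁻¹ • (gradient (fun θ' => Φ (sEP K) θ') θ
          - gradient (fun θ' => Φ sstar θ') θ) := by
  have hstep : ∀ η t, (St η (t + 1), Tt η (t + 1)) = cepStep Φ ℓ β η (St η t, Tt η t) :=
    fun η t => by rw [hTrec, hSrec]; rfl
  have hΦ1 : ContDiff ℝ 1 fun q : 𝕊 × 𝕋 => Φ q.1 q.2 := hΦ.of_le one_le_two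
  have hcont := continuous_trajectory (x := fun η t => (St η t, Tt η t))
    (continuous_cepStep hΦ1 hℓ β) (by simpa only [hS0, hT0] using continuous_const) hstep
  have hzero : ∀ t, (St 0 t, Tt 0 t) = (sEP t, θ) := by
    intro t
    induction t with
    | zero => rw [hS0, hT0, hsEP0]
    | succ t ih => rw [hstep, ih, cepStep_zero, hsEPrec]
  obtain ⟨hSzero, hTzero⟩ : (∀ t, St 0 t = sEP t) ∧ ∀ t, Tt 0 t = θ :=
    ⟨fun t => congrArg Prod.fst (hzero t), fun t => congrArg Prod.snd (hzero t)⟩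
  refine ⟨?_, ?_⟩
  · have hincrement : ∀ η t, Tt η (t + 1) = Tt η t + η • β⁻¹ •
        (gradient (fun θ' => Φ (St η (t + 1)) θ') (Tt η t)
          - gradient (fun θ' => Φ (St η t) θ') (Tt η t)) := fun η t => by
      rw [hTrec, div_eq_mul_inv, mul_smul]
    have hgradT := hΦ1.continuous_gradient_snd
    have hlim := tendsto_inv_smul_sub_of_increment_eq_smul hincrement (fun t =>
      (((hgradT.comp ((hcont (t + 1)).fst.prodMk (hcont t).snd)).sub
        (hgradT.comp (hcont t))).const_smul β⁻¹).continuousAt) K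
    simp only [hT0, hSzero, hTzero] at hlim
    exact hlim.mono_left (nhdsGT_le_nhdsNE 0)
  · rw [← smul_sum, sum_range_sub (fun t => gradient (fun θ' => Φ (sEP t) θ') θ), hsEP0]

/-- **The total C-EP weight update recovers the EP update in the small-learning-rate
limit:** `lim_{η→0⁺} (θ_K^{β,η} − θ)/η = Σ_{t<K} Δθᴱᴾ(β,t)
= (1/β)(∇θΦ(s_Kᵝ,θ) − ∇θΦ(s⋆,θ))`. -/
theorem cep_total_update_recovers_ep
    (Φ : 𝕊 → 𝕋 → ℝ) (ℓ : 𝕊 → ℝ)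
    (hΦ : ContDiff ℝ 2 (fun q : 𝕊 × 𝕋 => Φ q.1 q.2))
    (hℓ : ContDiff ℝ 1 ℓ)
    (θ : 𝕋) (sstar : 𝕊)
    (hfix : sstar = gradient (fun s => Φ s θ) sstar)
    (β : ℝ) (hβ : 0 < β) (K : ℕ) (hK : 1 ≤ K)
    -- EP second-phase trajectory
    (sEP : ℕ → 𝕊)
    (hsEP0 : sEP 0 = sstar)
    (hsEPrec : ∀ t, sEP (t+1) = gradient (fun s => Φ s θ) (sEP t) - β • gradient ℓ (sEP t))
    -- C-EP second-phase trajectory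
    (St : ℝ → ℕ → 𝕊) (Tt : ℝ → ℕ → 𝕋)
    (hS0 : ∀ η, St η 0 = sstar)
    (hT0 : ∀ η, Tt η 0 = θ)
    (hSrec : ∀ η t, St η (t+1)
      = gradient (fun s => Φ s (Tt η t)) (St η t) - β • gradient ℓ (St η t))
    (hTrec : ∀ η t, Tt η (t+1)
      = Tt η t + (η / β) • (gradient (fun θ' => Φ (St η (t+1)) θ') (Tt η t)
          - gradient (fun θ' => Φ (St η t) θ') (Tt η t))) :
    Tendsto (fun η => η⁻¹ • (Tt η K - θ)) (𝓝[>] (0:ℝ))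
      (𝓝 (∑ t ∈ Finset.range K,
        β⁻¹ • (gradient (fun θ' => Φ (sEP (t+1)) θ') θ
          - gradient (fun θ' => Φ (sEP t) θ') θ)))
    ∧ (∑ t ∈ Finset.range K,
        β⁻¹ • (gradient (fun θ' => Φ (sEP (t+1)) θ') θ
          - gradient (fun θ' => Φ (sEP t) θ') θ))
      = β⁻¹ • (gradient (fun θ' => Φ (sEP K) θ') θ
          - gradient (fun θ' => Φ sstar θ') θ) :=
  cep_total_update_recovers_ep_general Φ ℓ hΦ hℓ θ sstar β K sEP hsEP0 hsEPrec St Tt hS0 hT0 hSrec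
    hTrec
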